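/- Let R be a commutative ring, M a projective R-module, and m a positive integer such that the integer m! acts invertibly on M. Let the symmetric group Σ_m act on the m-fold tensor power M^{⊗m} = M ⊗_R ⋯ ⊗_R M by permuting the tensor factors, making M^{⊗m} a module over the group algebra R[Σ_m] = MonoidAlgebra R (Equiv.Perm (Fin m)). Then M^{⊗m} is a projective R[Σ_m]-module. -/
import Mathlib

open scoped TensorProduct

section Aux
variable {R : Type*} [CommRing R] {M : Type*} [AddCommGroup M] [Module R M]

/-- Projectivity of a finite tensor power of a projective module. -/
theorem projective_piTensorPow (hM : Module.Projective R M) (n : ℕ) :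
    Module.Projective R (⨂[R] (_ : Fin n), M) := by
  haveI := hM
  induction n with
  | zero =>
      exact Module.Projective.of_equiv (PiTensorProduct.isEmptyEquiv (Fin 0)).symm
  | succ n ih =>
      haveI := ih
      haveI : Module.Projective R (⨂[R] (_ : Fin 1), M) :=
        Module.Projective.of_equiv (PiTensorProduct.subsingletonEquiv (0 : Fin 1)).symm
      exact Module.Projective.of_equiv
        ((PiTensorProduct.tmulEquiv R M).trans
          (PiTensorProduct.reindex R (fun _ : Fin n ⊕ Fin 1 => M) finSumFinEquiv))

/-- If `n` acts invertibly on `M`, it acts invertibly on a positive tensor power. -/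
theorem bijective_zsmul_piTensorPow {n : ℕ} (m : ℕ) (hm : 0 < m)
    (hinv : Function.Bijective fun x : M => ((n : ℤ)) • x) :
    Function.Bijective fun x : ⨂[R] (_ : Fin m), M => ((n : ℤ)) • x := by
  set f : M →ₗ[R] M := ((n : R)) • LinearMap.id with hf
  have hfapp : ∀ x : M, f x = ((n : ℤ)) • x := by
    intro x
    simp [hf, Nat.cast_smul_eq_nsmul, natCast_zsmul]
  have hfb : Function.Bijective f := by
    have : (f : M → M) = fun x : M => ((n : ℤ)) • x := funext hfapp
    rw [this]; exact hinv
  set e : M ≃ₗ[R] M := LinearEquiv.ofBijective f hfb with he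
  set i0 : Fin m := ⟨0, hm⟩
  set E := PiTensorProduct.congr (Function.update (fun _ : Fin m => LinearEquiv.refl R M) i0 e)
    with hE
  have key : (E : (⨂[R] (_ : Fin m), M) →ₗ[R] ⨂[R] (_ : Fin m), M)
      = ((n : R)) • LinearMap.id := by
    apply PiTensorProduct.ext
    apply MultilinearMap.ext
    intro x
    simp only [LinearMap.compMultilinearMap_apply, LinearEquiv.coe_coe, hE,
      PiTensorProduct.congr_tprod, LinearMap.smul_apply, LinearMap.id_apply]
    have h1 : (fun i => (Function.update (fun _ : Fin m => LinearEquiv.refl R M) i0 e i) (x i))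
        = Function.update x i0 ((n : R) • x i0) := by
      funext i
      rcases eq_or_ne i i0 with h | h
      · subst h
        simp [he, hf]
      · simp [Function.update_of_ne h]
    rw [h1, MultilinearMap.map_update_smul, Function.update_eq_self]
  have : (E : (⨂[R] (_ : Fin m), M) → ⨂[R] (_ : Fin m), M)
      = fun x : ⨂[R] (_ : Fin m), M => ((n : ℤ)) • x := by
    funext x
    have := congrArg (fun (g : (⨂[R] (_ : Fin m), M) →ₗ[R] ⨂[R] (_ : Fin m), M) => g x) key
    simpa [Nat.cast_smul_eq_nsmul, natCast_zsmul] using this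
  rw [← this]
  exact E.bijective

end Aux


section Maschke
variable {k : Type*} [CommRing k] {G : Type*} [Group G]
variable {V : Type*} [AddCommGroup V] [Module k V] [Module (MonoidAlgebra k G) V]
variable [IsScalarTower k (MonoidAlgebra k G) V]
variable {W : Type*} [AddCommGroup W] [Module k W] [Module (MonoidAlgebra k G) W]
variable [IsScalarTower k (MonoidAlgebra k G) W]

/-- Universe-polymorphic version of `LinearMap.conjugate`. -/
noncomputable def myConjugate (π : W →ₗ[k] V) (g : G) : W →ₗ[k] V :=
  MonoidAlgebra.GroupSMul.linearMap k V g⁻¹ ∘ₗ π ∘ₗ MonoidAlgebra.GroupSMul.linearMap k W g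

theorem myConjugate_apply (π : W →ₗ[k] V) (g : G) (v : W) :
    myConjugate π g v =
      MonoidAlgebra.single g⁻¹ (1 : k) • π (MonoidAlgebra.single g (1 : k) • v) :=
  rfl

variable (G) in
/-- Universe-polymorphic version of `LinearMap.sumOfConjugatesEquivariant`. -/
noncomputable def mySumOfConjugatesEquivariant [Fintype G] (π : W →ₗ[k] V) :
    W →ₗ[MonoidAlgebra k G] V :=
  MonoidAlgebra.equivariantOfLinearOfComm (∑ g : G, myConjugate π g) fun g v => by
    simp only [LinearMap.sum_apply, Finset.smul_sum, myConjugate_apply]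
    refine Fintype.sum_bijective (· * g) (Group.mulRight_bijective g) _ _ fun i => ?_
    simp only [smul_smul, MonoidAlgebra.single_mul_single, mul_inv_rev, mul_inv_cancel_left,
      one_mul]

theorem mySumOfConjugatesEquivariant_apply [Fintype G] (π : W →ₗ[k] V) (v : W) :
    mySumOfConjugatesEquivariant G π v = ∑ g : G, myConjugate π g v := by
  simp [mySumOfConjugatesEquivariant, MonoidAlgebra.equivariantOfLinearOfComm]

theorem projective_monoidAlgebra_of_bijective_card [Fintype G]
    (hV : Module.Projective k V)
    (hbij : Function.Bijective fun v : V => ((Fintype.card G : ℤ)) • v) :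
    Module.Projective (MonoidAlgebra k G) V := by
  classical
  haveI := hV
  let total : (V →₀ MonoidAlgebra k G) →ₗ[MonoidAlgebra k G] V :=
    Finsupp.linearCombination (MonoidAlgebra k G) (id : V → V)
  have hsurj : Function.Surjective (total.restrictScalars k) := by
    intro v
    refine ⟨Finsupp.single v 1, ?_⟩
    show total (Finsupp.single v 1) = v
    simp [total]
  obtain ⟨π0, hπ0⟩ := Module.projective_lifting_property (total.restrictScalars k)
    (LinearMap.id : V →ₗ[k] V) hsurj
  have hπ0' : ∀ v : V, total (π0 v) = v := fun v =>
    congrArg (fun g : V →ₗ[k] V => g v) hπ0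
  let s1 : V →ₗ[MonoidAlgebra k G] (V →₀ MonoidAlgebra k G) :=
    mySumOfConjugatesEquivariant G π0
  have hts1 : ∀ v : V, total (s1 v) = (Fintype.card G : ℤ) • v := by
    intro v
    rw [show s1 v = ∑ g : G, myConjugate π0 g v from
      mySumOfConjugatesEquivariant_apply π0 v, map_sum]
    have h : ∀ g : G, total (myConjugate π0 g v) = v := by
      intro g
      rw [myConjugate_apply, map_smul, hπ0', ← mul_smul,
        MonoidAlgebra.single_mul_single, mul_one, inv_mul_cancel, ← MonoidAlgebra.one_def,
        one_smul]
    simp [h, Finset.sum_const, natCast_zsmul]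
  let nId : V →ₗ[MonoidAlgebra k G] V := total ∘ₗ s1
  have hnbij : Function.Bijective nId := by
    have h : (nId : V → V) = fun v : V => ((Fintype.card G : ℤ)) • v := funext hts1
    rw [h]; exact hbij
  let e : V ≃ₗ[MonoidAlgebra k G] V := LinearEquiv.ofBijective nId hnbij
  refine Module.Projective.of_split (s1 ∘ₗ (e.symm : V →ₗ[MonoidAlgebra k G] V)) total ?_
  ext v
  exact e.apply_symm_apply v
end Maschke


/-- The action of the symmetric group `Σ_m` on the `m`-fold tensor power
`M^{⊗m} = M ⊗_R ⋯ ⊗_R M` by permuting the tensor factors:  `σ` sends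
`x₁ ⊗ ⋯ ⊗ xₘ` to `x_{σ⁻¹ 1} ⊗ ⋯ ⊗ x_{σ⁻¹ m}`, packaged as a `Representation`. -/
noncomputable def permRep (R : Type*) [CommRing R] (M : Type*) [AddCommGroup M]
    [Module R M] (m : ℕ) :
    Representation R (Equiv.Perm (Fin m)) (⨂[R] (_ : Fin m), M) where
  toFun σ := (PiTensorProduct.reindex R (fun _ : Fin m => M) σ).toLinearMap
  map_one' := by
    apply LinearMap.ext
    intro x
    show PiTensorProduct.reindex R (fun _ : Fin m => M) (Equiv.refl (Fin m)) x = x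
    rw [PiTensorProduct.reindex_refl]
    rfl
  map_mul' σ τ := by
    apply LinearMap.ext
    intro x
    show PiTensorProduct.reindex R (fun _ : Fin m => M) (τ.trans σ) x =
      PiTensorProduct.reindex R (fun _ : Fin m => M) σ
        (PiTensorProduct.reindex R (fun _ : Fin m => M) τ x)
    exact (PiTensorProduct.reindex_reindex τ σ x).symm

noncomputable instance permRepTower (R : Type*) [CommRing R] (M : Type*) [AddCommGroup M]
    [Module R M] (m : ℕ) :
    IsScalarTower R (MonoidAlgebra R (Equiv.Perm (Fin m))) (permRep R M m).asModule :=
  ⟨fun r x v => by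
    show (permRep R M m).asAlgebraHom (r • x) v = r • ((permRep R M m).asAlgebraHom x v)
    rw [map_smul]
    rfl⟩

/-- Let `R` be a commutative ring, `M` a projective `R`-module, and `m`
a positive integer such that the integer `m!` acts invertibly on `M`.  Then the `m`-fold
tensor power `M^{⊗m}`, with the symmetric group `Σ_m` permuting the tensor factors, is a
projective module over the group algebra `R[Σ_m] = MonoidAlgebra R (Equiv.Perm (Fin m))`. -/
theorem stmt5 (R : Type*) [CommRing R] (M : Type*) [AddCommGroup M] [Module R M]
    (hM : Module.Projective R M) (m : ℕ) (hm : 0 < m)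
    (hinv : Function.Bijective fun x : M => ((Nat.factorial m : ℤ)) • x) :
    Module.Projective (MonoidAlgebra R (Equiv.Perm (Fin m))) (permRep R M m).asModule := by
  classical
  set G := Equiv.Perm (Fin m)
  have hcard : Fintype.card G = Nat.factorial m := by
    simp [G, Fintype.card_perm]
  have hprojV : Module.Projective R (permRep R M m).asModule :=
    projective_piTensorPow hM m
  have hbijV : Function.Bijective
      (fun v : (permRep R M m).asModule => ((Fintype.card G : ℤ)) • v) := by
    rw [hcard]
    exact bijective_zsmul_piTensorPow (R := R) (M := M) m hm hinv
  exact projective_monoidAlgebra_of_bijective_card hprojV hbijV
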